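/- For every fixed t > 0, lim_{α→0⁺} ∫₀^t ∫₀^s F_α(s−r) (4π(s−r))^{−1/2} dr ds = ∫₀^t ∫₀^s (4π(s−r))^{−1/2} dr ds = (2/(3√π)) t^{3/2}. Consequently, the variance of the limiting occupation-time process Γ_α converges, as α → 0, to (8/3)(χ(ρ)/√π) t^{3/2}, the variance of Γ_0. -/

import Mathlib

/-!
Since `0 ≤ 1 - e^{-2αz} ≤ 2αz` for `z ≥ 0`, the Gaussian moments `∫₀^∞ z e^{-z²/(4u)} dz = 2u` and
`∫₀^∞ z² e^{-z²/(4u)} dz = √π u √(4u)` give `0 ≤ 1 - F_α(u) ≤ α √(4πu)`. So the integrands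
`F_α(u) (4πu)^{-1/2}` and `(4πu)^{-1/2}` differ by at most `α`, and the two double integrals by
at most `α t²`. The limit is `(4π)^{-1/2} ∫₀^t ∫₀^s (s - r)^{-1/2} dr ds = (4π)^{-1/2} t^{3/2} / (3/4)`.
-/

open MeasureTheory Real Filter Set
open scoped Interval

/-- `F_α(t) = (1/(2t)) ∫₀^∞ z e^{−z²/(4t) − 2αz} dz`, appearing in the variance of the
limiting occupation-time process of the slow-bond exclusion process at `β = 1`. -/
noncomputable def Falpha (α t : ℝ) : ℝ :=
  (1 / (2 * t)) * ∫ z in Set.Ioi (0:ℝ), z * Real.exp (-z ^ 2 / (4 * t) - 2 * α * z)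

theorem integral_Ioi_rpow_mul_exp_neg_sq_div {q u : ℝ} (hq : -1 < q) (hu : 0 < u) :
    ∫ z in Ioi (0:ℝ), z ^ q * exp (-z ^ 2 / (4 * u))
      = (4 * u) ^ ((q + 1) / 2) / 2 * Gamma ((q + 1) / 2) := by
  have h4u : 0 < 4 * u := by positivity
  have h := integral_rpow_mul_exp_neg_mul_rpow two_pos hq (inv_pos.2 h4u)
  rw [inv_rpow h4u.le, neg_div, rpow_neg h4u.le, inv_inv] at h
  simp only [rpow_two] at h
  rw [div_eq_mul_one_div _ 2, ← h]
  congr! 4 with z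
  ring

theorem integrableOn_Ioi_rpow_mul_exp_neg_sq_div {q u : ℝ} (hq : -1 < q) (hu : 0 < u) :
    IntegrableOn (fun z : ℝ => z ^ q * exp (-z ^ 2 / (4 * u))) (Ioi 0) := by
  convert integrableOn_rpow_mul_exp_neg_mul_sq (inv_pos.2 (by positivity : 0 < 4 * u)) hq
    using 4 with z
  ring

theorem integral_Ioi_mul_exp_neg_sq_div {u : ℝ} (hu : 0 < u) :
    ∫ z in Ioi (0:ℝ), z * exp (-z ^ 2 / (4 * u)) = 2 * u := by
  have h := integral_Ioi_rpow_mul_exp_neg_sq_div (q := 1) (by norm_num) hu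
  norm_num [rpow_one] at h
  rw [h]
  ring

theorem integral_Ioi_sq_mul_exp_neg_sq_div {u : ℝ} (hu : 0 < u) :
    ∫ z in Ioi (0:ℝ), z ^ 2 * exp (-z ^ 2 / (4 * u)) = √π * u * √(4 * u) := by
  have h := integral_Ioi_rpow_mul_exp_neg_sq_div (q := 2) (by norm_num) hu
  have hΓ : Gamma (3 / 2) = √π / 2 := by
    rw [show (3 / 2 : ℝ) = 1 / 2 + 1 by norm_num, Gamma_add_one (by norm_num), Gamma_one_half_eq]
    ring
  have hpow : (4 * u) ^ ((3:ℝ) / 2) = 4 * u * √(4 * u) := by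
    rw [show (3 / 2 : ℝ) = 1 + 1 / 2 by norm_num, rpow_add (by positivity), rpow_one,
      sqrt_eq_rpow]
  norm_num [rpow_two] at h
  rw [h, hΓ, hpow]
  ring

theorem integrableOn_Ioi_mul_exp_neg_sq_div {u : ℝ} (hu : 0 < u) :
    IntegrableOn (fun z : ℝ => z * exp (-z ^ 2 / (4 * u))) (Ioi 0) := by
  simpa only [rpow_one] using integrableOn_Ioi_rpow_mul_exp_neg_sq_div (q := 1) (by norm_num) hu

theorem integrableOn_Ioi_sq_mul_exp_neg_sq_div {u : ℝ} (hu : 0 < u) :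
    IntegrableOn (fun z : ℝ => z ^ 2 * exp (-z ^ 2 / (4 * u))) (Ioi 0) := by
  simpa only [rpow_two] using integrableOn_Ioi_rpow_mul_exp_neg_sq_div (q := 2) (by norm_num) hu

theorem intervalIntegral.integral_zero_comp_sub_left {E : Type*} [NormedAddCommGroup E]
    [NormedSpace ℝ E] (f : ℝ → E) (s : ℝ) :
    ∫ r in (0:ℝ)..s, f (s - r) = ∫ u in (0:ℝ)..s, f u := by
  simpa only [sub_self, sub_zero] using
    intervalIntegral.integral_comp_sub_left f s (a := 0) (b := s)

theorem IntervalIntegrable.primitive {E : Type*} [NormedAddCommGroup E] [NormedSpace ℝ E]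
    {f : ℝ → E} {t : ℝ} (hf : IntervalIntegrable f volume 0 t) :
    IntervalIntegrable (fun s => ∫ u in (0:ℝ)..s, f u) volume 0 t :=
  (intervalIntegral.continuousOn_primitive_interval
    ((intervalIntegrable_iff' (by finiteness)).1 hf)).intervalIntegrable

theorem tendsto_integral_integral_comp_sub_of_norm_sub_le {ι E : Type*} [NormedAddCommGroup E]
    [NormedSpace ℝ E] {l : Filter ι} {k : ι → ℝ → E} {h : ℝ → E} {ε : ι → ℝ} {t : ℝ}
    (hh : IntervalIntegrable h volume 0 t)
    (hk : ∀ i, AEStronglyMeasurable (k i) (volume.restrict (Ι 0 t)))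
    (hkh : ∀ᶠ i in l, ∀ u ∈ Ι 0 t, ‖k i u - h u‖ ≤ ε i) (hε : Tendsto ε l (nhds 0)) :
    Tendsto (fun i => ∫ s in (0:ℝ)..t, ∫ r in (0:ℝ)..s, k i (s - r)) l
      (nhds (∫ s in (0:ℝ)..t, ∫ r in (0:ℝ)..s, h (s - r))) := by
  simp only [intervalIntegral.integral_zero_comp_sub_left]
  rw [tendsto_iff_norm_sub_tendsto_zero]
  refine squeeze_zero_norm' ?_ (by simpa using hε.mul_const (t ^ 2))
  filter_upwards [hkh] with i hi
  have hki : IntervalIntegrable (k i) volume 0 t := by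
    have hsub : IntegrableOn (fun u => k i u - h u) (Ι 0 t) :=
      IntegrableOn.of_bound measure_Ioc_lt_top ((hk i).sub hh.def'.aestronglyMeasurable) (ε i)
        ((ae_restrict_mem measurableSet_Ioc).mono hi)
    simpa using (intervalIntegrable_iff.2 hsub).add hh
  have hsub : ∀ s ∈ Ι 0 t, uIcc 0 s ⊆ uIcc 0 t := fun s hs =>
    uIcc_subset_uIcc_left (uIoc_subset_uIcc hs)
  rw [norm_norm, ← intervalIntegral.integral_sub hki.primitive hh.primitive]
  refine (intervalIntegral.norm_integral_le_of_norm_le_const (C := ε i * |t|)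
    fun s hs => ?_).trans_eq (by rw [sub_zero, mul_assoc, ← sq, sq_abs])
  rw [← intervalIntegral.integral_sub (hki.mono_set (hsub s hs)) (hh.mono_set (hsub s hs))]
  refine (intervalIntegral.norm_integral_le_of_norm_le_const fun u hu =>
    hi u (uIoc_subset_uIoc_of_uIcc_subset_uIcc (hsub s hs) hu)).trans ?_
  have hε0 : 0 ≤ ε i := (norm_nonneg _).trans (hi s hs)
  simpa using mul_le_mul_of_nonneg_left (abs_sub_left_of_mem_uIcc (uIoc_subset_uIcc hs)) hε0

theorem integral_integral_sub_rpow {p : ℝ} (hp : -1 < p) (t : ℝ) :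
    ∫ s in (0:ℝ)..t, ∫ r in (0:ℝ)..s, (s - r) ^ p = t ^ (p + 2) / ((p + 1) * (p + 2)) := by
  have hp1 : p + 1 ≠ 0 := by linarith
  have hp2 : p + 2 ≠ 0 := by linarith
  simp only [intervalIntegral.integral_zero_comp_sub_left (fun u => u ^ p),
    integral_rpow (Or.inl hp), zero_rpow hp1, sub_zero, intervalIntegral.integral_div,
    integral_rpow (Or.inl (by linarith : -1 < p + 1)), show p + 1 + 1 = p + 2 by ring,
    zero_rpow hp2]
  field_simp

theorem mul_exp_sub_mul_le {α z : ℝ} (hα : 0 ≤ α) (hz : 0 ≤ z) (a : ℝ) :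
    z * exp (a - 2 * α * z) ≤ z * exp a :=
  mul_le_mul_of_nonneg_left (exp_le_exp.2 (by nlinarith)) hz

theorem mul_exp_sub_mul_exp_sub_le {α z : ℝ} (hz : 0 ≤ z) (a : ℝ) :
    z * exp a - z * exp (a - 2 * α * z) ≤ 2 * α * (z ^ 2 * exp a) := by
  have h := one_sub_le_exp_neg (2 * α * z)
  rw [sub_eq_add_neg a, exp_add]
  nlinarith [mul_nonneg hz (exp_pos a).le]

theorem integrableOn_Ioi_mul_exp_neg_sq_div_sub {α u : ℝ} (hα : 0 ≤ α) (hu : 0 < u) :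
    IntegrableOn (fun z : ℝ => z * exp (-z ^ 2 / (4 * u) - 2 * α * z)) (Ioi 0) := by
  refine (integrableOn_Ioi_mul_exp_neg_sq_div hu).mono' (by fun_prop) ?_
  filter_upwards [ae_restrict_mem measurableSet_Ioi] with z hz
  rw [norm_of_nonneg (mul_nonneg (le_of_lt hz) (exp_pos _).le)]
  exact mul_exp_sub_mul_le hα (le_of_lt hz) _

theorem Falpha_le_one {α u : ℝ} (hα : 0 ≤ α) (hu : 0 ≤ u) : Falpha α u ≤ 1 := by
  rcases hu.eq_or_lt with rfl | hu
  · simp [Falpha]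
  rw [Falpha, one_div_mul_eq_div, div_le_one (by positivity),
    ← integral_Ioi_mul_exp_neg_sq_div hu]
  exact setIntegral_mono_on (integrableOn_Ioi_mul_exp_neg_sq_div_sub hα hu)
    (integrableOn_Ioi_mul_exp_neg_sq_div hu) measurableSet_Ioi
    fun z hz => mul_exp_sub_mul_le hα (le_of_lt hz) _

theorem one_sub_Falpha_le {α u : ℝ} (hα : 0 ≤ α) (hu : 0 < u) :
    1 - Falpha α u ≤ α * √(4 * π * u) := by
  have hint := integrableOn_Ioi_mul_exp_neg_sq_div hu
  have hint_α := integrableOn_Ioi_mul_exp_neg_sq_div_sub hα hu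
  calc 1 - Falpha α u
      = 1 / (2 * u) * ∫ z in Ioi (0:ℝ),
          (z * exp (-z ^ 2 / (4 * u)) - z * exp (-z ^ 2 / (4 * u) - 2 * α * z)) := by
        rw [integral_sub hint hint_α, integral_Ioi_mul_exp_neg_sq_div hu, Falpha]
        field_simp
    _ ≤ 1 / (2 * u) * ∫ z in Ioi (0:ℝ), 2 * α * (z ^ 2 * exp (-z ^ 2 / (4 * u))) := by
        refine mul_le_mul_of_nonneg_left ?_ (by positivity)
        exact setIntegral_mono_on (hint.sub hint_α)
          ((integrableOn_Ioi_sq_mul_exp_neg_sq_div hu).const_mul _) measurableSet_Ioi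
          fun z hz => mul_exp_sub_mul_exp_sub_le (le_of_lt hz) _
    _ = α * √(4 * π * u) := by
        rw [integral_const_mul, integral_Ioi_sq_mul_exp_neg_sq_div hu,
          show 4 * π * u = π * (4 * u) by ring, sqrt_mul pi_pos.le]
        field_simp

theorem measurable_Falpha (α : ℝ) : Measurable (Falpha α) := by
  refine Measurable.mul (by fun_prop) ?_
  have hF : StronglyMeasurable fun p : ℝ × ℝ => p.2 * exp (-p.2 ^ 2 / (4 * p.1) - 2 * α * p.2) :=
    (by fun_prop : Measurable _).stronglyMeasurable
  exact hF.integral_prod_right'.measurable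

theorem abs_Falpha_mul_inv_sqrt_sub_le {α u : ℝ} (hα : 0 ≤ α) (hu : 0 < u) :
    |Falpha α u * (√(4 * π * u))⁻¹ - (√(4 * π * u))⁻¹| ≤ α := by
  have hsqrt : 0 < √(4 * π * u) := by positivity
  calc |Falpha α u * (√(4 * π * u))⁻¹ - (√(4 * π * u))⁻¹|
      = (1 - Falpha α u) * (√(4 * π * u))⁻¹ := by
        rw [abs_of_nonpos (by nlinarith [Falpha_le_one hα hu.le, inv_pos.2 hsqrt])]
        ring
    _ ≤ α * √(4 * π * u) * (√(4 * π * u))⁻¹ := by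
        gcongr
        exact one_sub_Falpha_le hα hu
    _ = α := by field_simp

theorem inv_sqrt_four_pi_mul_eq {u : ℝ} (hu : 0 ≤ u) :
    (√(4 * π * u))⁻¹ = (2 * √π)⁻¹ * u ^ (-(1 / 2) : ℝ) := by
  rw [rpow_neg hu, ← sqrt_eq_rpow, ← mul_inv, sqrt_mul (by positivity),
    show (4:ℝ) = 2 ^ 2 by norm_num, sqrt_mul (by positivity), sqrt_sq zero_le_two]

theorem intervalIntegrable_inv_sqrt_four_pi_mul {t : ℝ} (ht : 0 ≤ t) :
    IntervalIntegrable (fun u => (√(4 * π * u))⁻¹) volume 0 t := by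
  refine ((intervalIntegral.intervalIntegrable_rpow' (r := -(1 / 2)) (by norm_num)).const_mul
    (2 * √π)⁻¹).congr fun u hu => ?_
  rw [uIoc_of_le ht] at hu
  exact (inv_sqrt_four_pi_mul_eq hu.1.le).symm

theorem integral_integral_inv_sqrt_four_pi_mul {t : ℝ} (ht : 0 ≤ t) :
    ∫ s in (0:ℝ)..t, ∫ r in (0:ℝ)..s, (√(4 * π * (s - r)))⁻¹
      = 2 / (3 * √π) * t ^ ((3:ℝ) / 2) := by
  have hkernel : ∀ s ∈ uIcc 0 t, ∀ r ∈ uIcc 0 s,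
      (√(4 * π * (s - r)))⁻¹ = (2 * √π)⁻¹ * (s - r) ^ (-(1 / 2) : ℝ) := by
    intro s hs r hr
    rw [uIcc_of_le ht] at hs
    rw [uIcc_of_le hs.1] at hr
    exact inv_sqrt_four_pi_mul_eq (sub_nonneg.2 hr.2)
  rw [intervalIntegral.integral_congr fun s hs => intervalIntegral.integral_congr (hkernel s hs)]
  simp only [intervalIntegral.integral_const_mul]
  rw [integral_integral_sub_rpow (by norm_num), show -(1 / 2) + 2 = (3:ℝ) / 2 by norm_num]
  field_simp
  norm_num

theorem tendsto_integral_integral_Falpha_mul_inv_sqrt {t : ℝ} (ht : 0 ≤ t) :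
    Tendsto (fun α : ℝ => ∫ s in (0:ℝ)..t, ∫ r in (0:ℝ)..s,
        Falpha α (s - r) * (√(4 * π * (s - r)))⁻¹) (nhdsWithin 0 (Ioi 0))
      (nhds (∫ s in (0:ℝ)..t, ∫ r in (0:ℝ)..s, (√(4 * π * (s - r)))⁻¹)) := by
  refine tendsto_integral_integral_comp_sub_of_norm_sub_le
    (k := fun α u => Falpha α u * (√(4 * π * u))⁻¹) (h := fun u => (√(4 * π * u))⁻¹) (ε := id)
    (intervalIntegrable_inv_sqrt_four_pi_mul ht)
    (fun α => ((measurable_Falpha α).mul (by fun_prop)).aestronglyMeasurable) ?_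
    (tendsto_nhdsWithin_of_tendsto_nhds tendsto_id)
  filter_upwards [self_mem_nhdsWithin] with α hα u hu
  rw [uIoc_of_le ht] at hu
  exact abs_Falpha_mul_inv_sqrt_sub_le (le_of_lt hα) hu.1

/-- `lim_{α→0⁺} ∫₀^t ∫₀^s F_α(s−r)(4π(s−r))^{−1/2} dr ds
= ∫₀^t ∫₀^s (4π(s−r))^{−1/2} dr ds = (2/(3√π)) t^{3/2}`; consequently the variance of `Γ_α`
converges, as `α → 0`, to `(8/3)(χ(ρ)/√π) t^{3/2}`, the variance of `Γ_0`. -/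
theorem variance_tendsto_zero (t : ℝ) (ht : 0 < t) :
    Filter.Tendsto (fun α : ℝ => ∫ s in (0:ℝ)..t, ∫ r in (0:ℝ)..s,
        Falpha α (s - r) * (Real.sqrt (4 * Real.pi * (s - r)))⁻¹)
      (nhdsWithin 0 (Set.Ioi 0))
      (nhds (∫ s in (0:ℝ)..t, ∫ r in (0:ℝ)..s, (Real.sqrt (4 * Real.pi * (s - r)))⁻¹)) ∧
    (∫ s in (0:ℝ)..t, ∫ r in (0:ℝ)..s, (Real.sqrt (4 * Real.pi * (s - r)))⁻¹)
      = (2 / (3 * Real.sqrt Real.pi)) * t ^ ((3:ℝ)/2) ∧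
    ∀ ρ ∈ Set.Icc (0:ℝ) 1,
      Filter.Tendsto (fun α : ℝ =>
          (4 / 3) * (ρ * (1 - ρ) / Real.sqrt Real.pi) * t ^ ((3:ℝ)/2)
            + 2 * (ρ * (1 - ρ)) * ∫ s in (0:ℝ)..t, ∫ r in (0:ℝ)..s,
                Falpha α (s - r) * (Real.sqrt (4 * Real.pi * (s - r)))⁻¹)
        (nhdsWithin 0 (Set.Ioi 0))
        (nhds ((8 / 3) * (ρ * (1 - ρ) / Real.sqrt Real.pi) * t ^ ((3:ℝ)/2))) := by
  have hlim := tendsto_integral_integral_Falpha_mul_inv_sqrt ht.le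
  have hval := integral_integral_inv_sqrt_four_pi_mul ht.le
  refine ⟨hlim, hval, fun ρ _ => ?_⟩
  rw [hval] at hlim
  convert (hlim.const_mul (2 * (ρ * (1 - ρ)))).const_add
    (4 / 3 * (ρ * (1 - ρ) / √π) * t ^ ((3:ℝ) / 2)) using 2
  field_simp
  ring
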